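/- Let λ ≥ 2 be an integer and let p be a source with 2^{−λ} ≤ p(1) < 1/(2^λ − 1). Then R*_opt(p) ≥ λ + lg p(1). -/

import Mathlib

/-- A source: a positive, monotonically nonincreasing probability mass function on `Fin n`. -/
def IsSource (n : ℕ) (p : Fin n → ℝ) : Prop :=
  (∀ i, 0 < p i) ∧ (∑ i, p i = 1) ∧ (∀ i j : Fin n, i ≤ j → p j ≤ p i)

/-- A codeword-length vector: positive integer lengths satisfying the Kraft inequality. -/
def IsCLV (n : ℕ) (l : Fin n → ℤ) : Prop :=
  (∀ i, 1 ≤ l i) ∧ (∑ i, (2:ℝ) ^ (-(l i)) ≤ 1)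

/-- Maximum pointwise redundancy `R*(l,p) = max_i (l(i) + lg p(i))`. -/
noncomputable def Rstar (n : ℕ) (l : Fin n → ℤ) (p : Fin n → ℝ) : ℝ :=
  ⨆ i : Fin n, ((l i : ℝ) + Real.logb 2 (p i))

/-- Minimum maximum pointwise redundancy over all codeword-length vectors. -/
noncomputable def RstarOpt (n : ℕ) (p : Fin n → ℝ) : ℝ :=
  sInf {r : ℝ | ∃ l : Fin n → ℤ, IsCLV n l ∧ Rstar n l p = r}

/-!
If `R*(l, p) < λ + lg p(1)`, then `p(i) < p(1) · 2^(λ - l(i))` for every `i`, and for `i = 1` this forces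
`l(1) ≤ λ - 1`, i.e. `p(1) · 2^(λ - l(1)) ≥ 2 p(1)`. Multiplying the Kraft inequality by `p(1) · 2^λ` and summing
these bounds gives `p(1) · 2^λ ≥ 1 + p(1)`, that is `p(1) ≥ 1 / (2^λ - 1)`.
-/

open Finset Real

lemma isCLV_const {n k : ℕ} (hk : 1 ≤ k) (hnk : n ≤ 2 ^ k) : IsCLV n fun _ => (k : ℤ) := by
  refine ⟨fun _ => Nat.one_le_cast.mpr hk, ?_⟩
  rw [sum_const, card_univ, Fintype.card_fin, nsmul_eq_mul, zpow_neg, zpow_natCast,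
    mul_inv_le_iff₀ (by positivity), one_mul]
  exact_mod_cast hnk

lemma add_logb_le_Rstar {n : ℕ} (l : Fin n → ℤ) (p : Fin n → ℝ) (i : Fin n) :
    (l i : ℝ) + logb 2 (p i) ≤ Rstar n l p :=
  le_ciSup (f := fun j => (l j : ℝ) + logb 2 (p j)) (Set.finite_range _).bddAbove i

lemma lt_mul_two_zpow_of_add_logb_lt {a b : ℝ} (ha : 0 < a) (hb : 0 < b) {k m : ℤ}
    (h : k + logb 2 a < m + logb 2 b) : a < b * 2 ^ (m - k) := by
  rw [← logb_lt_logb_iff one_lt_two ha (by positivity), logb_mul hb.ne' (by positivity),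
    ← rpow_intCast, logb_rpow two_pos (by norm_num)]
  push_cast
  linarith

lemma one_le_mul_two_zpow_sub_one_of_Rstar_lt {n : ℕ} {p : Fin n → ℝ} (hpos : ∀ i, 0 < p i)
    (hsum : ∑ i, p i = 1) {l : Fin n → ℤ} (hl : IsCLV n l) {m : ℤ} (z : Fin n)
    (hlt : Rstar n l p < m + logb 2 (p z)) : 1 ≤ p z * (2 ^ m - 1) := by
  set q := p z
  have hterm (i : Fin n) : (l i : ℝ) + logb 2 (p i) < m + logb 2 q :=
    (add_logb_le_Rstar l p i).trans_lt hlt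
  have hz : 2 ≤ (2 : ℝ) ^ (m - l z) := by
    have : l z < m := by exact_mod_cast (add_lt_add_iff_right _).1 (hterm z)
    simpa using zpow_le_zpow_right₀ one_le_two (show (1 : ℤ) ≤ m - l z by omega)
  -- at `z` the exponent is at least `1`, which leaves room for an extra `q`
  have hbound (i : Fin n) : p i + (if i = z then q else 0) ≤ q * 2 ^ (m - l i) := by
    split_ifs with hi
    · subst hi; nlinarith [hpos i]
    · simpa using (lt_mul_two_zpow_of_add_logb_lt (hpos i) (hpos z) (hterm i)).le
  have hkraft : ∑ i, q * 2 ^ (m - l i) ≤ q * 2 ^ m := by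
    simp_rw [sub_eq_add_neg, zpow_add₀ (two_ne_zero' ℝ), ← mul_sum, ← mul_assoc]
    exact mul_le_of_le_one_right (by positivity [hpos z]) hl.2
  have htotal := (sum_le_sum fun i _ => hbound i).trans hkraft
  rw [sum_add_distrib, hsum, sum_ite_eq' univ z, if_pos (mem_univ z)] at htotal
  linarith

theorem stmt4 (n : ℕ) (hn : 2 ≤ n) (lam : ℕ)
    (p : Fin n → ℝ) (hp : IsSource n p)
    (h2 : p ⟨0, by omega⟩ < 1 / ((2:ℝ) ^ lam - 1)) :
    (lam:ℝ) + Real.logb 2 (p ⟨0, by omega⟩) ≤ RstarOpt n p := by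
  refine le_csInf ⟨_, _, isCLV_const (by omega) (Nat.lt_two_pow_self (n := n)).le, rfl⟩ ?_
  rintro _ ⟨l, hl, rfl⟩
  by_contra! hlt
  have hkey := one_le_mul_two_zpow_sub_one_of_Rstar_lt hp.1 hp.2.1 hl _ (m := lam)
    (by exact_mod_cast hlt)
  rw [zpow_natCast] at hkey
  have hA : 0 < (2 : ℝ) ^ lam - 1 := pos_of_mul_pos_right (one_pos.trans_le hkey) (hp.1 _).le
  exact h2.not_ge ((div_le_iff₀ hA).2 (by linarith))
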